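/- arXiv:2002.00999 — 3 statements merged into one kernel-verified Lean document; each statement's English description precedes it below -/
import Mathlib

section
/- Let P be a 3-dimensional polytope, f a generic linear functional, and γ, γ' two f-monotone paths on P with ν(γ, γ') = ν ≥ 1. Then there exist f-monotone paths γ = γ_0, γ_1, ..., γ_ν = γ' on P such that ν(γ_{i-1}, γ_i) = 1 for every i ∈ [ν]. -/
noncomputable section

/-- Points of `ℝ³`. -/
abbrev V3 := EuclideanSpace ℝ (Fin 3)

/-- A 3-dimensional polytope: the convex hull of finitely many points of `ℝ³`
with nonempty interior. -/
def IsPolytope3 (P : Set V3) : Prop :=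
  (∃ S : Finset V3, P = convexHull ℝ (S : Set V3)) ∧ (interior P).Nonempty

/-- A 2-dimensional face of `P`: an exposed face whose affine hull is 2-dimensional. -/
def IsFace2 (P F : Set V3) : Prop :=
  IsExposed ℝ P F ∧ Module.finrank ℝ (vectorSpan ℝ F) = 2

/-- The number `f_2(P)` of 2-dimensional faces of `P`. -/
def f2count (P : Set V3) : ℕ := Nat.card {F : Set V3 // IsFace2 P F}

/-- `a` and `b` are joined by an edge of `P`: they are distinct vertices whose
segment is an exposed face of `P`. -/
def IsEdgePair (P : Set V3) (a b : V3) : Prop :=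
  a ≠ b ∧ a ∈ Set.extremePoints ℝ P ∧ b ∈ Set.extremePoints ℝ P ∧
    IsExposed ℝ P (segment ℝ a b)

/-- A linear functional is generic for `P` if it is injective on the vertices of `P`. -/
def Generic (P : Set V3) (f : V3 →ₗ[ℝ] ℝ) : Prop :=
  Set.InjOn f (Set.extremePoints ℝ P)

/-- The union of the edges of a path, presented as a list of vertices. -/
def edgeUnion (l : List V3) : Set V3 :=
  ⋃ p ∈ l.zip l.tail, segment ℝ p.1 p.2

/-- An `f`-monotone path on `P`: a nonempty list of vertices of `P`, consecutive ones
joined by edges of `P` along which `f` strictly increases, starting at the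
`f`-minimizing vertex and ending at the `f`-maximizing vertex. -/
def IsMonotonePath (P : Set V3) (f : V3 →ₗ[ℝ] ℝ) (l : List V3) : Prop :=
  l ≠ [] ∧ (∀ v ∈ l, v ∈ Set.extremePoints ℝ P) ∧
    l.Chain' (fun a b => IsEdgePair P a b ∧ f a < f b) ∧
    ∀ v ∈ Set.extremePoints ℝ P, f l.head! ≤ f v ∧ f v ≤ f l.getLast!

/-- The set of values `t ∈ f(P)` at which `γ` and `γ'` disagree on the fiber
`f⁻¹(t) ∩ P`. -/
def disagreeSet (P : Set V3) (f : V3 →ₗ[ℝ] ℝ) (γ γ' : List V3) : Set ℝ :=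
  {t | t ∈ ⇑f '' P ∧
    ⇑f ⁻¹' {t} ∩ P ∩ edgeUnion γ ≠ ⇑f ⁻¹' {t} ∩ P ∩ edgeUnion γ'}

/-- `ν(γ, γ')`: the number of connected components of the set of values `t ∈ f(P)`
at which `γ` and `γ'` disagree on the fiber `f⁻¹(t) ∩ P`. -/
def nu (P : Set V3) (f : V3 →ₗ[ℝ] ℝ) (γ γ' : List V3) : ℕ :=
  Nat.card (ConnectedComponents (disagreeSet P f γ γ'))

/-- `γ` and `γ'` differ by a polygon flip: they differ exactly by replacing one of the
two `f`-monotone arcs of the boundary of a 2-dimensional face `F` of `P` by the other. -/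
def IsFlip (P : Set V3) (f : V3 →ₗ[ℝ] ℝ) (γ γ' : List V3) : Prop :=
  ∃ F : Set V3, IsFace2 P F ∧ ∃ pre suf a a' : List V3,
    γ = pre ++ a ++ suf ∧ γ' = pre ++ a' ++ suf ∧ a ≠ a' ∧
    (∀ v ∈ a, v ∈ F) ∧ (∀ v ∈ a', v ∈ F) ∧
    ∀ v ∈ Set.extremePoints ℝ F, v ∈ a ∨ v ∈ a'

/-- The monotone path graph `G(P, f)`: nodes are the `f`-monotone paths on `P`,
two being adjacent if they differ by a polygon flip. -/
def MPG (P : Set V3) (f : V3 →ₗ[ℝ] ℝ) :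
    SimpleGraph {l : List V3 // IsMonotonePath P f l} :=
  SimpleGraph.fromRel fun x y => IsFlip P f x.1 y.1

/-!
Along a monotone path `f` is injective, so the fibre of a path over a level `t` between the
extreme values of `f` is a single point. If two paths agree at such a level, the common point is
either a common vertex or a relative interior point of an edge of each path; since edges are
exposed faces with extreme endpoints, the two edges then coincide. Either way the paths share a
vertex `w` with no disagreement in `[t, f w]`, so every gap of the disagreement set `D` is
straddled by the level of a common vertex. For the lowest common vertex `w` with `D` meeting
`(-∞, f w)`, the part of `D` below `f w` is connected (a gap in it would be straddled by a lower
common vertex), and the path following `γ'` up to `w` and `γ` after it disagrees with `γ`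
exactly on `D ∩ (-∞, f w)` and with `γ'` exactly on `D ∩ (f w, ∞)`. Induction on `ν` finishes
the proof.
-/

open Set

namespace List

variable {α : Type*} {l l₁ l₂ : List α} {v : α}

lemma getLast!_mem [Inhabited α] (hl : l ≠ []) : l.getLast! ∈ l := by
  rw [getLast!_eq_getLast?_getD, getLast?_eq_some_getLast hl]
  exact getLast_mem hl

lemma Pairwise.prefix_singleton {R : α → α → Prop} (hl : (l₁ ++ v :: l₂).Pairwise R) :
    (l₁ ++ [v]).Pairwise R :=
  hl.sublist (by simp)

lemma Pairwise.suffix_cons {R : α → α → Prop} (hl : (l₁ ++ v :: l₂).Pairwise R) :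
    (v :: l₂).Pairwise R :=
  hl.sublist (sublist_append_right _ _)

end List

@[simp]
lemma edgeUnion_nil : edgeUnion [] = ∅ := by simp [edgeUnion]

@[simp]
lemma edgeUnion_singleton (a : V3) : edgeUnion [a] = ∅ := by simp [edgeUnion]

lemma edgeUnion_cons_cons (a b : V3) (l : List V3) :
    edgeUnion (a :: b :: l) = segment ℝ a b ∪ edgeUnion (b :: l) := by
  simp [edgeUnion, List.zip_cons_cons]

lemma edgeUnion_pair (a b : V3) : edgeUnion [a, b] = segment ℝ a b := by
  simp [edgeUnion_cons_cons]

lemma edgeUnion_append_cons (l₁ : List V3) (v : V3) (l₂ : List V3) :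
    edgeUnion (l₁ ++ v :: l₂) = edgeUnion (l₁ ++ [v]) ∪ edgeUnion (v :: l₂) := by
  induction l₁ with
  | nil => simp
  | cons a l₁ ih =>
    cases l₁ with
    | nil => simp [edgeUnion_cons_cons]
    | cons b l₁ =>
      simp only [List.cons_append] at ih ⊢
      rw [edgeUnion_cons_cons, ih, edgeUnion_cons_cons, union_assoc]

lemma mem_edgeUnion_iff {x : V3} {l : List V3} :
    x ∈ edgeUnion l ↔
      ∃ l₁ a b l₂, l = l₁ ++ a :: b :: l₂ ∧ x ∈ segment ℝ a b := by
  induction l with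
  | nil => simp
  | cons c l ih =>
    cases l with
    | nil =>
      simp only [edgeUnion_singleton, mem_empty_iff_false, false_iff]
      rintro ⟨_ | ⟨u, l₁⟩, a, b, l₂, h, -⟩ <;> simp_all
    | cons d l =>
      rw [edgeUnion_cons_cons, mem_union, ih]
      constructor
      · rintro (hx | ⟨l₁, a, b, l₂, h, hx⟩)
        · exact ⟨[], c, d, l, rfl, hx⟩
        · exact ⟨c :: l₁, a, b, l₂, by rw [h]; rfl, hx⟩
      · rintro ⟨_ | ⟨u, l₁⟩, a, b, l₂, h, hx⟩
        · simp only [List.nil_append, List.cons.injEq] at h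
          obtain ⟨rfl, rfl, rfl⟩ := h
          exact Or.inl hx
        · simp only [List.cons_append, List.cons.injEq] at h
          exact Or.inr ⟨l₁, a, b, l₂, h.2, hx⟩

lemma edgeUnion_subset_of_convex {s : Set V3} (hs : Convex ℝ s) {l : List V3}
    (hl : ∀ v ∈ l, v ∈ s) : edgeUnion l ⊆ s :=
  iUnion₂_subset fun _ hp =>
    hs.segment_subset (hl _ (List.of_mem_zip hp).1)
      (hl _ (List.mem_of_mem_tail (List.of_mem_zip hp).2))

section Segment

variable {f : V3 →ₗ[ℝ] ℝ}

lemma apply_mem_Ioo_of_mem_openSegment {a b x : V3} (hab : f a < f b)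
    (hx : x ∈ openSegment ℝ a b) : f x ∈ Ioo (f a) (f b) := by
  rw [← openSegment_eq_Ioo hab, ← f.coe_toAffineMap, ← image_openSegment]
  exact mem_image_of_mem _ hx

lemma exists_mem_segment_apply_eq {a b : V3} (hab : f a ≤ f b) {t : ℝ}
    (ht : t ∈ Icc (f a) (f b)) : ∃ x ∈ segment ℝ a b, f x = t := by
  rwa [← segment_eq_Icc hab, ← f.coe_toAffineMap, ← image_segment] at ht

lemma eq_left_of_mem_segment_of_apply_eq {a b x : V3} (hab : f a ≠ f b)
    (hx : x ∈ segment ℝ a b) (h : f x = f a) : x = a := by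
  obtain ⟨θ, -, rfl⟩ := (segment_eq_image' ℝ a b).subset hx
  simp only [map_add, map_smul, map_sub, smul_eq_mul, add_eq_left, mul_eq_zero,
    sub_eq_zero] at h
  rcases h with rfl | h
  · simp
  · exact absurd h.symm hab

end Segment

def pathFiber (f : V3 →ₗ[ℝ] ℝ) (l : List V3) (t : ℝ) : Set V3 :=
  ⇑f ⁻¹' {t} ∩ edgeUnion l

section Increasing

variable {f : V3 →ₗ[ℝ] ℝ} {l l₁ l₂ : List V3} {a b v : V3}

lemma edgeUnion_cons_subset (hl : (v :: l).Pairwise (f · < f ·)) :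
    edgeUnion (v :: l) ⊆ f ⁻¹' Ici (f v) := by
  refine edgeUnion_subset_of_convex ((convex_Ici (𝕜 := ℝ) (f v)).linear_preimage f)
    fun w hw => ?_
  rcases List.mem_cons.1 hw with rfl | hw
  · exact mem_preimage.2 self_mem_Ici
  · exact (List.rel_of_pairwise_cons hl hw).le

lemma edgeUnion_append_singleton_subset (hl : (l ++ [v]).Pairwise (f · < f ·)) :
    edgeUnion (l ++ [v]) ⊆ f ⁻¹' Iic (f v) := by
  refine edgeUnion_subset_of_convex ((convex_Iic (𝕜 := ℝ) (f v)).linear_preimage f)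
    fun w hw => ?_
  rcases List.mem_append.1 hw with hw | hw
  · exact (List.pairwise_append.1 hl).2.2 w hw v (List.mem_singleton_self v) |>.le
  · rw [List.mem_singleton.1 hw]; exact mem_preimage.2 self_mem_Iic

lemma eq_of_mem_edgeUnion_cons (hl : (v :: l).Pairwise (f · < f ·)) {x : V3}
    (hx : x ∈ edgeUnion (v :: l)) (hfx : f x = f v) : x = v := by
  cases l with
  | nil => simp at hx
  | cons b l =>
    have hvb : f v < f b := List.rel_of_pairwise_cons hl List.mem_cons_self
    rw [edgeUnion_cons_cons] at hx
    rcases hx with hx | hx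
    · exact eq_left_of_mem_segment_of_apply_eq hvb.ne hx hfx
    · have := edgeUnion_cons_subset (List.Pairwise.of_cons hl) hx
      simp only [mem_preimage, mem_Ici] at this
      linarith

lemma eq_of_mem_edgeUnion_append_singleton (hl : (l ++ [v]).Pairwise (f · < f ·)) {x : V3}
    (hx : x ∈ edgeUnion (l ++ [v])) (hfx : f x = f v) : x = v := by
  rcases List.eq_nil_or_concat l with rfl | ⟨l, a, rfl⟩
  · simp at hx
  · have hl' : (l ++ [a] ++ [v]).Pairwise (f · < f ·) := by simpa using hl
    have hav : f a < f v := (List.pairwise_append.1 hl').2.2 a (by simp) v (by simp)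
    rw [List.concat_eq_append, List.append_assoc, List.singleton_append,
      edgeUnion_append_cons, edgeUnion_pair] at hx
    rcases hx with hx | hx
    · have := edgeUnion_append_singleton_subset (List.pairwise_append.1 hl').1 hx
      simp only [mem_preimage, mem_Iic] at this
      linarith
    · rw [segment_symm] at hx
      exact eq_left_of_mem_segment_of_apply_eq hav.ne' hx hfx

lemma pathFiber_append_cons (l₁ : List V3) (v : V3) (l₂ : List V3) (t : ℝ) :
    pathFiber f (l₁ ++ v :: l₂) t =
      pathFiber f (l₁ ++ [v]) t ∪ pathFiber f (v :: l₂) t := by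
  rw [pathFiber, edgeUnion_append_cons, inter_union_distrib_left]
  rfl

lemma pathFiber_cons_of_lt (hl : (v :: l).Pairwise (f · < f ·)) {t : ℝ} (ht : t < f v) :
    pathFiber f (v :: l) t = ∅ := by
  refine eq_empty_of_forall_notMem fun x ⟨hfx, hx⟩ => ?_
  have : f v ≤ f x := edgeUnion_cons_subset hl hx
  rw [mem_preimage, mem_singleton_iff] at hfx
  linarith

lemma pathFiber_append_singleton_of_gt (hl : (l ++ [v]).Pairwise (f · < f ·)) {t : ℝ}
    (ht : f v < t) : pathFiber f (l ++ [v]) t = ∅ := by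
  refine eq_empty_of_forall_notMem fun x ⟨hfx, hx⟩ => ?_
  have : f x ≤ f v := edgeUnion_append_singleton_subset hl hx
  rw [mem_preimage, mem_singleton_iff] at hfx
  linarith

lemma pathFiber_of_lt (hl : (l₁ ++ v :: l₂).Pairwise (f · < f ·)) {t : ℝ} (ht : t < f v) :
    pathFiber f (l₁ ++ v :: l₂) t = pathFiber f (l₁ ++ [v]) t := by
  rw [pathFiber_append_cons, pathFiber_cons_of_lt hl.suffix_cons ht, union_empty]

lemma pathFiber_of_gt (hl : (l₁ ++ v :: l₂).Pairwise (f · < f ·)) {t : ℝ} (ht : f v < t) :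
    pathFiber f (l₁ ++ v :: l₂) t = pathFiber f (v :: l₂) t := by
  rw [pathFiber_append_cons, pathFiber_append_singleton_of_gt hl.prefix_singleton ht,
    empty_union]

lemma pathFiber_vertex (hl : (l₁ ++ v :: l₂).Pairwise (f · < f ·))
    (hne : l₁ ≠ [] ∨ l₂ ≠ []) :
    pathFiber f (l₁ ++ v :: l₂) (f v) = {v} := by
  apply subset_antisymm
  · rw [pathFiber_append_cons]
    rintro x (⟨hfx, hx⟩ | ⟨hfx, hx⟩)
    · exact eq_of_mem_edgeUnion_append_singleton hl.prefix_singleton hx hfx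
    · exact eq_of_mem_edgeUnion_cons hl.suffix_cons hx hfx
  · rintro x rfl
    refine ⟨rfl, ?_⟩
    rw [edgeUnion_append_cons]
    rcases hne with hne | hne
    · obtain ⟨l₁, a, rfl⟩ := (List.eq_nil_or_concat l₁).resolve_left hne
      left
      rw [List.concat_eq_append, List.append_assoc, List.singleton_append,
        edgeUnion_append_cons, edgeUnion_pair]
      exact .inr (right_mem_segment ℝ a x)
    · obtain ⟨b, l₂, rfl⟩ := List.exists_cons_of_ne_nil hne
      right
      rw [edgeUnion_cons_cons]
      exact .inl (left_mem_segment ℝ x b)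

lemma pathFiber_of_mem_Ioo (hl : (l₁ ++ a :: b :: l₂).Pairwise (f · < f ·)) {t : ℝ}
    (ht : t ∈ Ioo (f a) (f b)) :
    pathFiber f (l₁ ++ a :: b :: l₂) t = f ⁻¹' {t} ∩ segment ℝ a b := by
  rw [pathFiber_of_gt hl ht.1, ← List.singleton_append,
    pathFiber_of_lt (l₁ := [a]) hl.suffix_cons ht.2, pathFiber, List.singleton_append,
    edgeUnion_pair]

lemma pathFiber_nonempty (hl : l.Pairwise (f · < f ·)) (hlt : f l.head! < f l.getLast!)
    {t : ℝ} (ht : t ∈ Icc (f l.head!) (f l.getLast!)) : (pathFiber f l t).Nonempty := by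
  induction l with
  | nil => simp at hlt
  | cons a l ih =>
    cases l with
    | nil => simp at hlt
    | cons b l =>
      have hab : f a < f b := List.rel_of_pairwise_cons hl List.mem_cons_self
      by_cases htb : t ≤ f b
      · obtain ⟨x, hx, hfx⟩ := exists_mem_segment_apply_eq hab.le ⟨ht.1, htb⟩
        exact ⟨x, hfx, by rw [edgeUnion_cons_cons]; exact .inl hx⟩
      · simp only [List.head!_cons, List.getLast!_eq_getLast?_getD, List.getLast?_cons_cons]
          at ht hlt ih
        have hbt : f b < t := not_le.1 htb
        obtain ⟨x, hfx, hx⟩ := ih hl.of_cons (by linarith [ht.2]) ⟨hbt.le, ht.2⟩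
        exact ⟨x, hfx, by rw [edgeUnion_cons_cons]; exact .inr hx⟩

end Increasing

section Edges

variable {P : Set V3} {f : V3 →ₗ[ℝ] ℝ} {a b c d p : V3}

lemma eq_or_eq_of_mem_segment_of_mem_extremePoints {v : V3} (hv : v ∈ P.extremePoints ℝ)
    (ha : a ∈ P) (hb : b ∈ P) (h : v ∈ segment ℝ a b) : v = a ∨ v = b := by
  rcases (mem_extremePoints_iff_forall_segment.1 hv).2 a ha b hb h with h | h
  exacts [.inl h.symm, .inr h.symm]

lemma IsEdgePair.eq_of_mem_openSegment (hab : IsEdgePair P a b) (hcd : IsEdgePair P c d)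
    (hfab : f a < f b) (hfcd : f c < f d) (hp : p ∈ openSegment ℝ a b)
    (hp' : p ∈ segment ℝ c d) : a = c ∧ b = d := by
  have hext := hcd.2.2.2.isExtreme
  have hc : c ∈ P := hcd.2.1.1
  have hd : d ∈ P := hcd.2.2.1.1
  rcases eq_or_eq_of_mem_segment_of_mem_extremePoints hab.2.1 hc hd
      (hext.left_mem_of_mem_openSegment hab.2.1.1 hab.2.2.1.1 hp' hp) with rfl | rfl <;>
    rcases eq_or_eq_of_mem_segment_of_mem_extremePoints hab.2.2.1 hc hd
      (hext.right_mem_of_mem_openSegment hab.2.1.1 hab.2.2.1.1 hp' hp) with rfl | rfl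
  · exact absurd rfl hab.1
  · exact ⟨rfl, rfl⟩
  · linarith
  · exact absurd rfl hab.1

end Edges

namespace IsMonotonePath

variable {P : Set V3} {f : V3 →ₗ[ℝ] ℝ} {γ γ' : List V3}

lemma pairwise (hγ : IsMonotonePath P f γ) : γ.Pairwise (f · < f ·) := by
  have : (γ.map f).IsChain (· < ·) := (List.isChain_map f).2 (hγ.2.2.1.imp fun _ _ h => h.2)
  exact List.pairwise_map.1 (List.isChain_iff_pairwise.1 this)

lemma isEdgePair {l₁ l₂ : List V3} {a b : V3}
    (hγ : IsMonotonePath P f (l₁ ++ a :: b :: l₂)) :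
    IsEdgePair P a b ∧ f a < f b :=
  (List.isChain_cons_cons.1 (List.isChain_append.1 hγ.2.2.1).2.1).1

lemma edgeUnion_subset (hγ : IsMonotonePath P f γ) : edgeUnion γ ⊆ P := by
  intro x hx
  obtain ⟨l₁, a, b, l₂, rfl, hxab⟩ := mem_edgeUnion_iff.1 hx
  exact hγ.isEdgePair.1.2.2.2.subset hxab

lemma apply_mem_Icc (hγ : IsMonotonePath P f γ) {v : V3} (hv : v ∈ P.extremePoints ℝ) :
    f v ∈ Icc (f γ.head!) (f γ.getLast!) :=
  hγ.2.2.2 v hv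

lemma edgeUnion_subset_preimage_Icc (hγ : IsMonotonePath P f γ) :
    edgeUnion γ ⊆ f ⁻¹' Icc (f γ.head!) (f γ.getLast!) :=
  edgeUnion_subset_of_convex ((convex_Icc _ _).linear_preimage f) fun v hv =>
    hγ.apply_mem_Icc (hγ.2.1 v hv)

lemma head_eq (hf : Generic P f) (hγ : IsMonotonePath P f γ) (hγ' : IsMonotonePath P f γ') :
    γ.head! = γ'.head! := by
  have h : γ.head! ∈ P.extremePoints ℝ := hγ.2.1 _ (List.head!_mem_self hγ.1)
  have h' : γ'.head! ∈ P.extremePoints ℝ := hγ'.2.1 _ (List.head!_mem_self hγ'.1)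
  exact hf h h' ((hγ.apply_mem_Icc h').1.antisymm (hγ'.apply_mem_Icc h).1)

lemma getLast_eq (hf : Generic P f) (hγ : IsMonotonePath P f γ) (hγ' : IsMonotonePath P f γ') :
    γ.getLast! = γ'.getLast! := by
  have h : γ.getLast! ∈ P.extremePoints ℝ := hγ.2.1 _ (List.getLast!_mem hγ.1)
  have h' : γ'.getLast! ∈ P.extremePoints ℝ := hγ'.2.1 _ (List.getLast!_mem hγ'.1)
  exact hf h h' ((hγ'.apply_mem_Icc h).2.antisymm (hγ.apply_mem_Icc h').2)

lemma eq_singleton_of_getLast_le (hγ : IsMonotonePath P f γ) (h : f γ.getLast! ≤ f γ.head!) :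
    γ = [γ.head!] := by
  match γ, hγ with
  | [], hγ => exact absurd rfl hγ.1
  | [a], _ => rfl
  | a :: b :: l, hγ =>
    have hab : f a < f b := (hγ.isEdgePair (l₁ := [])).2
    have hb : f b ≤ f (a :: b :: l).getLast! := (hγ.apply_mem_Icc (hγ.2.1 b (by simp))).2
    exact absurd h (by simp only [List.head!_cons]; linarith)

lemma head_lt_getLast_of_ne (hf : Generic P f) (hγ : IsMonotonePath P f γ)
    (hγ' : IsMonotonePath P f γ') (hne : γ ≠ γ') : f γ.head! < f γ.getLast! := by
  by_contra! h
  have h' : f γ'.getLast! ≤ f γ'.head! := by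
    rwa [← head_eq hf hγ hγ', ← getLast_eq hf hγ hγ']
  rw [hγ.eq_singleton_of_getLast_le h, hγ'.eq_singleton_of_getLast_le h',
    head_eq hf hγ hγ'] at hne
  exact hne rfl

lemma pathFiber_vertex (hγ : IsMonotonePath P f γ) (hlt : f γ.head! < f γ.getLast!) {v : V3}
    (hv : v ∈ γ) : pathFiber f γ (f v) = {v} := by
  obtain ⟨l₁, l₂, rfl⟩ := List.append_of_mem hv
  refine _root_.pathFiber_vertex hγ.pairwise ?_
  by_contra! h
  obtain ⟨rfl, rfl⟩ := h
  simp at hlt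

lemma splice {l₁ l₂ m₁ m₂ : List V3} {v : V3} (hγ : IsMonotonePath P f (l₁ ++ v :: l₂))
    (hγ' : IsMonotonePath P f (m₁ ++ v :: m₂)) : IsMonotonePath P f (m₁ ++ v :: l₂) := by
  have hhead : (m₁ ++ v :: l₂).head! = (m₁ ++ v :: m₂).head! := by cases m₁ <;> rfl
  have hlast : (m₁ ++ v :: l₂).getLast! = (l₁ ++ v :: l₂).getLast! := by
    simp [List.getLast?_cons]
  refine ⟨by simp, fun w hw => ?_, ?_, fun w hw => ?_⟩
  · rcases List.mem_append.1 hw with hw | hw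
    · exact hγ'.2.1 w (List.mem_append_left _ hw)
    · exact hγ.2.1 w (List.mem_append_right _ hw)
  · obtain ⟨-, hc, -⟩ := List.isChain_append.1 hγ.2.2.1
    obtain ⟨hc', -, hlink⟩ := List.isChain_append.1 hγ'.2.2.1
    refine List.isChain_append.2 ⟨hc', hc, fun x hx y hy => ?_⟩
    obtain rfl : v = y := by simpa using hy
    exact hlink x hx v (by simp)
  · rw [hhead, hlast]
    exact ⟨(hγ'.apply_mem_Icc hw).1, (hγ.apply_mem_Icc hw).2⟩

end IsMonotonePath

section Disagreement

variable {P : Set V3} {f : V3 →ₗ[ℝ] ℝ} {γ γ' : List V3}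

lemma IsMonotonePath.pathFiber_eq_empty (hγ : IsMonotonePath P f γ) {t : ℝ}
    (ht : t ∉ Icc (f γ.head!) (f γ.getLast!)) : pathFiber f γ t = ∅ :=
  eq_empty_of_forall_notMem fun _ ⟨hfx, hx⟩ =>
    ht (mem_singleton_iff.1 hfx ▸ hγ.edgeUnion_subset_preimage_Icc hx)

lemma disagreeSet_eq (hγ : IsMonotonePath P f γ) (hγ' : IsMonotonePath P f γ') :
    disagreeSet P f γ γ' = {t | pathFiber f γ t ≠ pathFiber f γ' t} := by
  have hfib {l : List V3} (hl : IsMonotonePath P f l) (t : ℝ) :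
      ⇑f ⁻¹' {t} ∩ P ∩ edgeUnion l = pathFiber f l t := by
    rw [pathFiber, inter_assoc, inter_eq_right.2 hl.edgeUnion_subset]
  ext t
  simp only [disagreeSet, mem_ofPred_eq, hfib hγ, hfib hγ']
  refine ⟨And.right, fun h => ⟨?_, h⟩⟩
  by_contra ht
  have hempty {l : List V3} (hl : IsMonotonePath P f l) : pathFiber f l t = ∅ :=
    eq_empty_of_forall_notMem fun x ⟨hfx, hx⟩ =>
      ht ⟨x, hl.edgeUnion_subset hx, mem_singleton_iff.1 hfx⟩
  exact h ((hempty hγ).trans (hempty hγ').symm)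

lemma disagreeSet_self (hγ : IsMonotonePath P f γ) : disagreeSet P f γ γ = ∅ := by
  simp [disagreeSet_eq hγ hγ]

lemma disagreeSet_subset_Icc (hf : Generic P f) (hγ : IsMonotonePath P f γ)
    (hγ' : IsMonotonePath P f γ') :
    disagreeSet P f γ γ' ⊆ Icc (f γ.head!) (f γ.getLast!) := by
  intro t ht
  by_contra hIcc
  rw [disagreeSet_eq hγ hγ'] at ht
  apply ht
  rw [hγ.pathFiber_eq_empty hIcc, hγ'.pathFiber_eq_empty]
  rwa [← hγ.head_eq hf hγ', ← hγ.getLast_eq hf hγ']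

lemma apply_notMem_disagreeSet (hf : Generic P f) (hγ : IsMonotonePath P f γ)
    (hγ' : IsMonotonePath P f γ') (hne : γ ≠ γ') {v : V3} (hv : v ∈ γ) (hv' : v ∈ γ') :
    f v ∉ disagreeSet P f γ γ' := by
  rw [disagreeSet_eq hγ hγ', mem_ofPred_eq, not_not,
    hγ.pathFiber_vertex (hγ.head_lt_getLast_of_ne hf hγ' hne) hv,
    hγ'.pathFiber_vertex (hγ'.head_lt_getLast_of_ne hf hγ hne.symm) hv']

lemma notMem_disagreeSet_of_mem_Ioo {l₁ l₂ m₁ m₂ : List V3} {a b : V3}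
    (hγ : IsMonotonePath P f (l₁ ++ a :: b :: l₂))
    (hγ' : IsMonotonePath P f (m₁ ++ a :: b :: m₂)) {t : ℝ} (ht : t ∈ Ioo (f a) (f b)) :
    t ∉ disagreeSet P f (l₁ ++ a :: b :: l₂) (m₁ ++ a :: b :: m₂) := by
  rw [disagreeSet_eq hγ hγ', mem_ofPred_eq, not_not, pathFiber_of_mem_Ioo hγ.pairwise ht,
    pathFiber_of_mem_Ioo hγ'.pairwise ht]

lemma exists_common_vertex_between (hf : Generic P f) (hγ : IsMonotonePath P f γ)
    (hγ' : IsMonotonePath P f γ') {x y z : ℝ} (hx : x ∈ disagreeSet P f γ γ')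
    (hy : y ∈ disagreeSet P f γ γ') (hz : z ∉ disagreeSet P f γ γ') (hxz : x < z)
    (hzy : z < y) :
    ∃ w ∈ γ, w ∈ γ' ∧ x < f w ∧ f w < y := by
  have hne : γ ≠ γ' := by
    rintro rfl
    simp [disagreeSet_self hγ] at hx
  have hIcc := disagreeSet_subset_Icc hf hγ hγ'
  obtain ⟨p, hpz, hp⟩ := pathFiber_nonempty hγ.pairwise (hγ.head_lt_getLast_of_ne hf hγ' hne)
    ⟨(hIcc hx).1.trans hxz.le, hzy.le.trans (hIcc hy).2⟩
  have hp' : p ∈ edgeUnion γ' := by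
    rw [disagreeSet_eq hγ hγ', mem_ofPred_eq, not_not] at hz
    exact (hz ▸ ⟨hpz, hp⟩ : p ∈ pathFiber f γ' z).2
  rw [mem_preimage, mem_singleton_iff] at hpz
  subst hpz
  obtain ⟨l₁, a, b, l₂, rfl, hpab⟩ := mem_edgeUnion_iff.1 hp
  obtain ⟨m₁, c, d, m₂, rfl, hpcd⟩ := mem_edgeUnion_iff.1 hp'
  obtain ⟨hab, hfab⟩ := hγ.isEdgePair
  obtain ⟨hcd, hfcd⟩ := hγ'.isEdgePair
  by_cases hpγ : p ∈ l₁ ++ a :: b :: l₂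
  · refine ⟨p, hpγ, ?_, hxz, hzy⟩
    rcases eq_or_eq_of_mem_segment_of_mem_extremePoints (hγ.2.1 p hpγ) hcd.2.1.1 hcd.2.2.1.1
      hpcd with rfl | rfl <;> simp
  have hpo : p ∈ openSegment ℝ a b :=
    mem_openSegment_of_ne_left_right (by rintro rfl; simp at hpγ) (by rintro rfl; simp at hpγ)
      hpab
  obtain ⟨rfl, rfl⟩ := hab.eq_of_mem_openSegment hcd hfab hfcd hpo hpcd
  have hpIoo := apply_mem_Ioo_of_mem_openSegment hfab hpo
  refine ⟨b, by simp, by simp, hxz.trans hpIoo.2, ?_⟩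
  by_contra! hyb
  rcases hyb.lt_or_eq with hyb | rfl
  · exact notMem_disagreeSet_of_mem_Ioo hγ hγ' ⟨hpIoo.1.trans hzy, hyb⟩ hy
  · exact apply_notMem_disagreeSet hf hγ hγ' hne (by simp) (by simp) hy

lemma disagreeSet_splice (hf : Generic P f) {l₁ l₂ m₁ m₂ : List V3} {v : V3}
    (hγ : IsMonotonePath P f (l₁ ++ v :: l₂)) (hγ' : IsMonotonePath P f (m₁ ++ v :: m₂))
    (hne : l₁ ++ v :: l₂ ≠ m₁ ++ v :: m₂) :
    disagreeSet P f (l₁ ++ v :: l₂) (m₁ ++ v :: l₂) =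
        disagreeSet P f (l₁ ++ v :: l₂) (m₁ ++ v :: m₂) ∩ Iio (f v) ∧
      disagreeSet P f (m₁ ++ v :: l₂) (m₁ ++ v :: m₂) =
        disagreeSet P f (l₁ ++ v :: l₂) (m₁ ++ v :: m₂) ∩ Ioi (f v) := by
  have hσ := hγ.splice hγ'
  have hlt := hγ.head_lt_getLast_of_ne hf hγ' hne
  have hσlt : f (m₁ ++ v :: l₂).head! < f (m₁ ++ v :: l₂).getLast! := by
    rwa [← hγ.head_eq hf hσ, ← hγ.getLast_eq hf hσ]
  have hlt' : f (m₁ ++ v :: m₂).head! < f (m₁ ++ v :: m₂).getLast! := by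
    rwa [← hγ.head_eq hf hγ', ← hγ.getLast_eq hf hγ']
  have hvertex : pathFiber f (m₁ ++ v :: l₂) (f v) = pathFiber f (l₁ ++ v :: l₂) (f v) ∧
      pathFiber f (m₁ ++ v :: l₂) (f v) = pathFiber f (m₁ ++ v :: m₂) (f v) := by
    simp only [hσ.pathFiber_vertex hσlt (v := v) (by simp),
      hγ.pathFiber_vertex hlt (v := v) (by simp), hγ'.pathFiber_vertex hlt' (v := v) (by simp),
      and_self]
  have hbelow {t : ℝ} (ht : t < f v) :
      pathFiber f (m₁ ++ v :: l₂) t = pathFiber f (m₁ ++ v :: m₂) t := by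
    rw [pathFiber_of_lt hσ.pairwise ht, pathFiber_of_lt hγ'.pairwise ht]
  have habove {t : ℝ} (ht : f v < t) :
      pathFiber f (m₁ ++ v :: l₂) t = pathFiber f (l₁ ++ v :: l₂) t := by
    rw [pathFiber_of_gt hσ.pairwise ht, pathFiber_of_gt hγ.pairwise ht]
  simp only [disagreeSet_eq hγ hσ, disagreeSet_eq hσ hγ', disagreeSet_eq hγ hγ']
  constructor <;> ext t <;> rcases lt_trichotomy t (f v) with ht | rfl | ht
  · simp [ht, hbelow ht]
  · simp [← hvertex.1]
  · simp [ht.not_gt, habove ht]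
  · simp [ht.not_gt, hbelow ht]
  · simp [hvertex.2]
  · simp [ht, habove ht]

end Disagreement

section Components

variable {X : Type*} [TopologicalSpace X]

def componentIn (E : Set X) : ConnectedComponents E → Set X :=
  Quotient.lift (fun x : E => ((↑) : E → X) '' connectedComponent x) fun _ _ h =>
    congrArg (((↑) : E → X) '' ·) h

lemma componentIn_mk (E : Set X) (x : E) :
    componentIn E (ConnectedComponents.mk x) = connectedComponentIn E x :=
  (connectedComponentIn_eq_image x.2).symm

lemma componentIn_injective (E : Set X) : Function.Injective (componentIn E) := by
  intro c c' h
  obtain ⟨x, rfl⟩ := ConnectedComponents.surjective_coe c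
  obtain ⟨y, rfl⟩ := ConnectedComponents.surjective_coe c'
  exact ConnectedComponents.coe_eq_coe.2 (image_injective.2 Subtype.val_injective h)

lemma range_componentIn (E : Set X) : range (componentIn E) = connectedComponentIn E '' E := by
  ext s
  constructor
  · rintro ⟨c, rfl⟩
    obtain ⟨x, rfl⟩ := ConnectedComponents.surjective_coe c
    exact ⟨x, x.2, (componentIn_mk E x).symm⟩
  · rintro ⟨x, hx, rfl⟩
    exact ⟨ConnectedComponents.mk ⟨x, hx⟩, componentIn_mk E _⟩

lemma natCard_connectedComponents (E : Set X) :
    Nat.card (ConnectedComponents E) = (connectedComponentIn E '' E).ncard := by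
  rw [← range_componentIn, ← Nat.card_coe_set_eq,
    Nat.card_range_of_injective (componentIn_injective E)]

lemma finite_image_connectedComponentIn (E : Set X) [Finite (ConnectedComponents E)] :
    (connectedComponentIn E '' E).Finite :=
  range_componentIn E ▸ finite_range _

lemma natCard_connectedComponents_of_isConnected {E : Set X} (hE : IsConnected E) :
    Nat.card (ConnectedComponents E) = 1 :=
  have := isConnected_iff_connectedSpace.1 hE
  Nat.card_eq_one_iff_unique.2 ⟨inferInstance, inferInstance⟩

lemma not_isPreconnected_of_one_lt_natCard {E : Set X}
    (hE : 1 < Nat.card (ConnectedComponents E)) : ¬IsPreconnected E := fun h =>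
  have := isPreconnected_iff_preconnectedSpace.1 h
  (Finite.card_le_one_iff_subsingleton.2 inferInstance).not_gt hE

end Components

section LinearOrder

variable {α : Type*} [ConditionallyCompleteLinearOrder α] [TopologicalSpace α] [OrderTopology α]
  {D : Set α} {t : α}

lemma connectedComponentIn_inter_Iio (ht : t ∉ D) {x : α} (hx : x ∈ D) (hxt : x < t) :
    connectedComponentIn (D ∩ Iio t) x = connectedComponentIn D x := by
  refine (connectedComponentIn_mono x inter_subset_left).antisymm
    (isPreconnected_connectedComponentIn.subset_connectedComponentIn (mem_connectedComponentIn hx)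
      fun y hy => ⟨connectedComponentIn_subset _ _ hy, ?_⟩)
  by_contra! hty
  exact ht (connectedComponentIn_subset D x
    (isPreconnected_connectedComponentIn.ordConnected.out (mem_connectedComponentIn hx) hy
      ⟨hxt.le, not_lt.1 hty⟩))

lemma connectedComponentIn_inter_Ioi (ht : t ∉ D) {x : α} (hx : x ∈ D) (htx : t < x) :
    connectedComponentIn (D ∩ Ioi t) x = connectedComponentIn D x := by
  refine (connectedComponentIn_mono x inter_subset_left).antisymm
    (isPreconnected_connectedComponentIn.subset_connectedComponentIn (mem_connectedComponentIn hx)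
      fun y hy => ⟨connectedComponentIn_subset _ _ hy, ?_⟩)
  by_contra! hyt
  exact ht (connectedComponentIn_subset D x
    (isPreconnected_connectedComponentIn.ordConnected.out hy (mem_connectedComponentIn hx)
      ⟨not_lt.1 hyt, htx.le⟩))

lemma natCard_connectedComponents_eq_add [Finite (ConnectedComponents D)] (ht : t ∉ D) :
    Nat.card (ConnectedComponents D) =
      Nat.card (ConnectedComponents ↥(D ∩ Iio t)) +
        Nat.card (ConnectedComponents ↥(D ∩ Ioi t)) := by
  have hsplit : D = D ∩ Iio t ∪ D ∩ Ioi t := by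
    ext x
    simp only [mem_union, mem_inter_iff, mem_Iio, mem_Ioi, ← and_or_left, iff_self_and]
    exact fun hx => lt_or_gt_of_ne (ne_of_mem_of_not_mem hx ht)
  have hlow : connectedComponentIn D '' (D ∩ Iio t) =
      connectedComponentIn (D ∩ Iio t) '' (D ∩ Iio t) :=
    image_congr fun x hx => (connectedComponentIn_inter_Iio ht hx.1 hx.2).symm
  have hup : connectedComponentIn D '' (D ∩ Ioi t) =
      connectedComponentIn (D ∩ Ioi t) '' (D ∩ Ioi t) :=
    image_congr fun x hx => (connectedComponentIn_inter_Ioi ht hx.1 hx.2).symm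
  have himage : connectedComponentIn D '' D =
      connectedComponentIn D '' (D ∩ Iio t) ∪ connectedComponentIn D '' (D ∩ Ioi t) := by
    rw [← image_union, ← hsplit]
  have hfin := finite_image_connectedComponentIn D
  rw [himage] at hfin
  rw [natCard_connectedComponents, natCard_connectedComponents, natCard_connectedComponents,
    himage, ← hlow, ← hup]
  refine ncard_union_eq ?_ (hfin.subset subset_union_left) (hfin.subset subset_union_right)
  rw [disjoint_left]
  rintro _ ⟨x, hx, rfl⟩ ⟨y, hy, hyx⟩
  have hxy : x ∈ connectedComponentIn D y := hyx ▸ mem_connectedComponentIn hx.1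
  rw [← connectedComponentIn_inter_Ioi ht hy.1 hy.2] at hxy
  exact (hx.2.trans (connectedComponentIn_subset _ _ hxy).2).false

variable [DenselyOrdered α]

lemma exists_lt_lt_notMem_of_not_isPreconnected {E : Set α} (hE : ¬IsPreconnected E) :
    ∃ x ∈ E, ∃ y ∈ E, ∃ z ∉ E, x < z ∧ z < y := by
  by_contra! h
  refine hE (isPreconnected_iff_ordConnected.2 ⟨fun x hx y hy z hz => ?_⟩)
  by_contra hzE
  rcases hz.1.lt_or_eq with hxz | rfl
  · rcases hz.2.lt_or_eq with hzy | rfl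
    · exact (h x hx y hy z hzE hxz).not_gt hzy
    · exact hzE hy
  · exact hzE hx

lemma exists_isConnected_inter_Iio {S : Set α} (hS : S.Finite) (hD : ¬IsPreconnected D)
    (hsep : ∀ x ∈ D, ∀ y ∈ D, ∀ z ∉ D, x < z → z < y → ∃ s ∈ S, x < s ∧ s < y) :
    ∃ s ∈ S, IsConnected (D ∩ Iio s) := by
  obtain ⟨x, hx, y, hy, z, hz, hxz, hzy⟩ := exists_lt_lt_notMem_of_not_isPreconnected hD
  obtain ⟨s, hs, hxs, -⟩ := hsep x hx y hy z hz hxz hzy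
  obtain ⟨s, ⟨hsS, hsne⟩, hmin⟩ := exists_min_image {s ∈ S | (D ∩ Iio s).Nonempty} id
    (hS.subset (sep_subset _ _)) ⟨s, hs, x, hx, hxs⟩
  refine ⟨s, hsS, hsne, ?_⟩
  by_contra hE
  obtain ⟨x, hx, y, hy, z, hz, hxz, hzy⟩ := exists_lt_lt_notMem_of_not_isPreconnected hE
  obtain ⟨s', hs', hxs', hs'y⟩ :=
    hsep x hx.1 y hy.1 z (fun hzD => hz ⟨hzD, hzy.trans hy.2⟩) hxz hzy
  exact (hmin s' ⟨hs', x, hx.1, hxs'⟩).not_gt (hs'y.trans hy.2)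

end LinearOrder

lemma exists_monotonePath_nu_eq_one {P : Set V3} {f : V3 →ₗ[ℝ] ℝ} (hf : Generic P f)
    {γ γ' : List V3} (hγ : IsMonotonePath P f γ) (hγ' : IsMonotonePath P f γ')
    (h : 2 ≤ nu P f γ γ') :
    ∃ σ, IsMonotonePath P f σ ∧ nu P f γ σ = 1 ∧ nu P f σ γ' + 1 = nu P f γ γ' := by
  have hfin : Finite (ConnectedComponents (disagreeSet P f γ γ')) :=
    Nat.finite_of_card_ne_zero (by rw [nu] at h; omega)
  have hD := not_isPreconnected_of_one_lt_natCard h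
  have hne : γ ≠ γ' := by
    rintro rfl
    exact hD (disagreeSet_self hγ ▸ isPreconnected_empty)
  obtain ⟨_, ⟨w, ⟨hw, hw'⟩, rfl⟩, hconn⟩ :=
    exists_isConnected_inter_Iio (S := f '' {w | w ∈ γ ∧ w ∈ γ'})
    ((γ.finite_toSet.subset fun _ hw => hw.1).image f) hD
    fun x hx y hy z hz hxz hzy => by
      obtain ⟨w, hw, hw', hxw, hwy⟩ := exists_common_vertex_between hf hγ hγ' hx hy hz hxz hzy
      exact ⟨f w, ⟨w, ⟨hw, hw'⟩, rfl⟩, hxw, hwy⟩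
  have hcut := apply_notMem_disagreeSet hf hγ hγ' hne hw hw'
  obtain ⟨l₁, l₂, rfl⟩ := List.append_of_mem hw
  obtain ⟨m₁, m₂, rfl⟩ := List.append_of_mem hw'
  obtain ⟨hlow, hup⟩ := disagreeSet_splice hf hγ hγ' hne
  refine ⟨m₁ ++ w :: l₂, hγ.splice hγ', ?_, ?_⟩
  · rw [nu, hlow, natCard_connectedComponents_of_isConnected hconn]
  · rw [nu, nu, hup, natCard_connectedComponents_eq_add hcut,
      natCard_connectedComponents_of_isConnected hconn, add_comm]

theorem nu_decomposition_general (P : Set V3) (f : V3 →ₗ[ℝ] ℝ)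
    (hf : Generic P f) (γ γ' : List V3)
    (hγ : IsMonotonePath P f γ) (hγ' : IsMonotonePath P f γ')
    (ν : ℕ) (hν : nu P f γ γ' = ν) (hν1 : 1 ≤ ν) :
    ∃ g : Fin (ν + 1) → List V3,
      g 0 = γ ∧ g (Fin.last ν) = γ' ∧ (∀ i, IsMonotonePath P f (g i)) ∧
      ∀ i : Fin ν, nu P f (g i.castSucc) (g i.succ) = 1 := by
  induction ν, hν1 using Nat.le_induction generalizing γ with
  | base =>
    refine ⟨![γ, γ'], rfl, rfl, fun i => ?_, fun i => ?_⟩ <;> fin_cases i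
    exacts [hγ, hγ', hν]
  | succ n _ ih =>
    obtain ⟨σ, hσ, hγσ, hσγ'⟩ := exists_monotonePath_nu_eq_one hf hγ hγ' (by omega)
    obtain ⟨g, rfl, hlast, hg, hgν⟩ := ih σ hσ (by omega)
    refine ⟨Fin.cons γ g, rfl, by simpa using hlast, Fin.cases hγ hg, Fin.cases hγσ ?_⟩
    simpa [← Fin.succ_castSucc] using hgν

/-- If `ν(γ, γ') = ν ≥ 1` then there are `f`-monotone paths
`γ = γ_0, γ_1, ..., γ_ν = γ'` with `ν(γ_{i-1}, γ_i) = 1` for every `i`. -/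
theorem nu_decomposition (P : Set V3) (hP : IsPolytope3 P) (f : V3 →ₗ[ℝ] ℝ)
    (hf : Generic P f) (γ γ' : List V3)
    (hγ : IsMonotonePath P f γ) (hγ' : IsMonotonePath P f γ')
    (ν : ℕ) (hν : nu P f γ γ' = ν) (hν1 : 1 ≤ ν) :
    ∃ g : Fin (ν + 1) → List V3,
      g 0 = γ ∧ g (Fin.last ν) = γ' ∧ (∀ i, IsMonotonePath P f (g i)) ∧
      ∀ i : Fin ν, nu P f (g i.castSucc) (g i.succ) = 1 :=
  nu_decomposition_general P f hf γ γ' hγ hγ' ν hν hν1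

end
end

section
/- Let Q = (ζ_0, ζ_1, ..., ζ_q) and R = (η_0, η_1, ..., η_r) be two walks in graphs K and L respectively, and suppose compatibility data allows concatenating nodes ζ_i ∗ η_j into nodes of a graph H whenever the terminal edge of ζ_i and initial edge of η_j have equal images under given simplicial maps α and β. If α(Q') = β(R') for the induced walks Q', R' in the common target graph, then the sequence of nodes defined by starting at ζ_0 ∗ η_0 and repeatedly moving to ζ_{i+1} ∗ η_j if defined, else to ζ_i ∗ η_{j+1} if defined, else to ζ_{i+1} ∗ η_{j+1}, is a well-defined walk in H from ζ_0 ∗ η_0 to ζ_q ∗ η_r. -/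
/-- A simplicial map of graphs: each edge is sent to an edge or contracted to a node. -/
def SimplicialMap {VA VB : Type*} (A : SimpleGraph VA) (B : SimpleGraph VB)
    (φ : VA → VB) : Prop :=
  ∀ x y : VA, A.Adj x y → B.Adj (φ x) (φ y) ∨ φ x = φ y

/-- The graph `H` of concatenations: nodes are pairs `ζ ∗ η` (well-defined when the
compatibility condition holds) and steps move one or both coordinates along an edge. -/
def PatchGraph {VK VL : Type*} (K : SimpleGraph VK) (L : SimpleGraph VL)
    (Compat : VK → VL → Prop) : SimpleGraph (VK × VL) :=
  SimpleGraph.fromRel fun p p' =>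
    Compat p.1 p.2 ∧ Compat p'.1 p'.2 ∧
      ((K.Adj p.1 p'.1 ∧ p.2 = p'.2) ∨ (p.1 = p'.1 ∧ L.Adj p.2 p'.2) ∨
        (K.Adj p.1 p'.1 ∧ L.Adj p.2 p'.2))

/-!
Write `a i = α (ζ i)` and `b j = β (η j)`. The greedy walk keeps the invariant that the
destuttered tails `a i, …, a q` and `b j, …, b r` coincide; their heads then agree, i.e.
`ζ i ∗ η j` is defined. A step along an edge contracted by `α` (or by `β`) does not change the
corresponding tail. If neither such step is available, both tails drop their common head, so
a diagonal step is possible and restores the invariant. Since `i + j` increases, the walk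
reaches `(q, r)`.
-/

theorem List.head?_destutter' {α : Type*} (R : α → α → Prop) [DecidableRel R] (a : α) :
    ∀ l : List α, (l.destutter' R a).head? = some a
  | [] => rfl
  | b :: l => by
    rw [List.destutter'_cons]
    split
    · rfl
    · exact List.head?_destutter' R a l

theorem drop_ofFn_eq_cons {V : Type*} (f : ℕ → V) {n i : ℕ} (hi : i ≤ n) :
    (List.ofFn fun t : Fin (n + 1) => f t).drop i
      = f i :: (List.ofFn fun t : Fin (n + 1) => f t).drop (i + 1) := by
  rw [List.drop_eq_getElem_cons (by simpa using Nat.lt_succ_of_le hi), List.getElem_ofFn]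

section ReducedTail

variable {V : Type*} [DecidableEq V] (f : ℕ → V) (n : ℕ)

def reducedTail (i : ℕ) : List V :=
  ((List.ofFn fun t : Fin (n + 1) => f t).drop i).destutter (· ≠ ·)

variable {f n}

theorem head?_reducedTail {i : ℕ} (hi : i ≤ n) : (reducedTail f n i).head? = some (f i) := by
  rw [reducedTail, drop_ofFn_eq_cons f hi, List.destutter_cons', List.head?_destutter']

theorem reducedTail_self : reducedTail f n n = [f n] := by
  rw [reducedTail, drop_ofFn_eq_cons f le_rfl, List.drop_of_length_le (by simp),
    List.destutter_singleton]

theorem reducedTail_succ_of_eq {i : ℕ} (hi : i < n) (h : f (i + 1) = f i) :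
    reducedTail f n (i + 1) = reducedTail f n i := by
  rw [reducedTail, reducedTail, drop_ofFn_eq_cons f hi.le, drop_ofFn_eq_cons f hi,
    List.destutter_cons_cons, if_neg (by simp [h]), List.destutter_cons', h]

theorem reducedTail_of_succ_ne {i : ℕ} (hi : i < n) (h : f (i + 1) ≠ f i) :
    reducedTail f n i = f i :: reducedTail f n (i + 1) := by
  rw [reducedTail, reducedTail, drop_ofFn_eq_cons f hi.le, drop_ofFn_eq_cons f hi,
    List.destutter_cons_cons, if_pos (Ne.symm h), List.destutter_cons']

theorem lt_of_reducedTail_eq {g : ℕ → V} {m i j : ℕ} (hi : i < n) (h : f (i + 1) ≠ f i)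
    (hj : j ≤ m) (hfg : reducedTail f n i = reducedTail g m j) : j < m := by
  refine lt_of_le_of_ne hj fun hjm => ?_
  rw [reducedTail_of_succ_ne hi h, hjm, reducedTail_self, List.cons_eq_cons] at hfg
  simpa [hfg.2] using head?_reducedTail (f := f) hi

end ReducedTail

section GreedyStep

variable {V : Type*} [DecidableEq V] (a b : ℕ → V) (q r : ℕ)

def greedyStep (p : ℕ × ℕ) : ℕ × ℕ :=
  if p.1 < q ∧ a (p.1 + 1) = b p.2 then (p.1 + 1, p.2)
  else if p.2 < r ∧ a p.1 = b (p.2 + 1) then (p.1, p.2 + 1)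
  else (p.1 + 1, p.2 + 1)

def TailsMatch (p : ℕ × ℕ) : Prop :=
  p.1 ≤ q ∧ p.2 ≤ r ∧ reducedTail a q p.1 = reducedTail b r p.2

theorem greedyStep_spec (p : ℕ × ℕ) :
    (p.1 < q ∧ a (p.1 + 1) = b p.2 →
        (greedyStep a b q r p).1 = p.1 + 1 ∧ (greedyStep a b q r p).2 = p.2) ∧
      (¬(p.1 < q ∧ a (p.1 + 1) = b p.2) ∧ (p.2 < r ∧ a p.1 = b (p.2 + 1)) →
        (greedyStep a b q r p).1 = p.1 ∧ (greedyStep a b q r p).2 = p.2 + 1) ∧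
      (¬(p.1 < q ∧ a (p.1 + 1) = b p.2) ∧ ¬(p.2 < r ∧ a p.1 = b (p.2 + 1)) →
        (greedyStep a b q r p).1 = p.1 + 1 ∧ (greedyStep a b q r p).2 = p.2 + 1) := by
  unfold greedyStep
  split_ifs <;> simp_all

theorem greedyStep_eq_or (p : ℕ × ℕ) :
    greedyStep a b q r p = (p.1 + 1, p.2) ∨ greedyStep a b q r p = (p.1, p.2 + 1) ∨
      greedyStep a b q r p = (p.1 + 1, p.2 + 1) := by
  unfold greedyStep
  split_ifs <;> simp

variable {a b q r}

theorem TailsMatch.apply_eq {p : ℕ × ℕ} (h : TailsMatch a b q r p) : a p.1 = b p.2 :=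
  Option.some_injective _ <| by rw [← head?_reducedTail h.1, h.2.2, head?_reducedTail h.2.1]

theorem tailsMatch_greedyStep {p : ℕ × ℕ} (h : TailsMatch a b q r p) (hp : p ≠ (q, r)) :
    TailsMatch a b q r (greedyStep a b q r p) := by
  obtain ⟨i, j⟩ := p
  obtain ⟨hi, hj, hD⟩ := h
  have hab : a i = b j := TailsMatch.apply_eq ⟨hi, hj, hD⟩
  unfold greedyStep
  split_ifs with ha hb
  · refine ⟨ha.1, hj, ?_⟩
    rwa [reducedTail_succ_of_eq ha.1 (ha.2.trans hab.symm)]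
  · refine ⟨hi, hb.1, ?_⟩
    rwa [reducedTail_succ_of_eq hb.1 (hb.2.symm.trans hab)]
  · have ha' : i < q → a (i + 1) ≠ a i := fun hiq h => ha ⟨hiq, h.trans hab⟩
    have hb' : j < r → b (j + 1) ≠ b j := fun hjr h => hb ⟨hjr, hab.trans h.symm⟩
    -- a step on either side that changes the image forces a step on the other side
    have hj_of_hi : i < q → j < r := fun hiq => lt_of_reducedTail_eq hiq (ha' hiq) hj hD
    have hi_of_hj : j < r → i < q := fun hjr => lt_of_reducedTail_eq hjr (hb' hjr) hi hD.symm
    have hij : i < q ∧ j < r := by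
      by_cases hiq : i < q
      · exact ⟨hiq, hj_of_hi hiq⟩
      · have hjr : j < r := by
          by_contra hjr
          exact hp (by simp only [Prod.mk.injEq]; omega)
        exact ⟨hi_of_hj hjr, hjr⟩
    refine ⟨hij.1, hij.2, ?_⟩
    rw [reducedTail_of_succ_ne hij.1 (ha' hij.1), reducedTail_of_succ_ne hij.2 (hb' hij.2)] at hD
    exact (List.cons_eq_cons.mp hD).2

theorem TailsMatch.exists_iterate_greedyStep_eq {p : ℕ × ℕ} (h : TailsMatch a b q r p) :
    ∃ m, (greedyStep a b q r)^[m] p = (q, r) ∧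
      ∀ l ≤ m, TailsMatch a b q r ((greedyStep a b q r)^[l] p) := by
  induction hn : (q - p.1) + (r - p.2) using Nat.strong_induction_on generalizing p with
  | _ n ih =>
  by_cases hp : p = (q, r)
  · exact ⟨0, hp, fun l hl => by rwa [Nat.le_zero.mp hl]⟩
  have h' := tailsMatch_greedyStep h hp
  have hlt : (q - (greedyStep a b q r p).1) + (r - (greedyStep a b q r p).2) < n := by
    obtain ⟨hi, hj, -⟩ := h'
    rcases greedyStep_eq_or a b q r p with e | e | e <;>
      rw [e] at hi hj ⊢ <;> dsimp only at hi hj ⊢ <;> omega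
  obtain ⟨m, hm, hmatch⟩ := ih _ hlt h' rfl
  refine ⟨m + 1, hm, fun l hl => ?_⟩
  rcases l with _ | l
  · exact h
  · exact hmatch l (by omega)

end GreedyStep

theorem patchGraph_adj_of_move {VK VL : Type*} {K : SimpleGraph VK} {L : SimpleGraph VL}
    {Compat : VK → VL → Prop} {q r : ℕ} {ζ : ℕ → VK} {η : ℕ → VL}
    (hζ : ∀ i < q, K.Adj (ζ i) (ζ (i + 1))) (hη : ∀ j < r, L.Adj (η j) (η (j + 1)))
    {p p' : ℕ × ℕ} (hc : Compat (ζ p.1) (η p.2)) (hc' : Compat (ζ p'.1) (η p'.2))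
    (hi' : p'.1 ≤ q) (hj' : p'.2 ≤ r)
    (hmove : p' = (p.1 + 1, p.2) ∨ p' = (p.1, p.2 + 1) ∨ p' = (p.1 + 1, p.2 + 1)) :
    (PatchGraph K L Compat).Adj (ζ p.1, η p.2) (ζ p'.1, η p'.2) := by
  obtain ⟨i, j⟩ := p
  rw [PatchGraph, SimpleGraph.fromRel_adj]
  rcases hmove with rfl | rfl | rfl
  · exact ⟨fun e => (hζ i hi').ne (congrArg Prod.fst e),
      Or.inl ⟨hc, hc', Or.inl ⟨hζ i hi', rfl⟩⟩⟩
  · exact ⟨fun e => (hη j hj').ne (congrArg Prod.snd e),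
      Or.inl ⟨hc, hc', Or.inr (Or.inl ⟨rfl, hη j hj'⟩)⟩⟩
  · exact ⟨fun e => (hζ i hi').ne (congrArg Prod.fst e),
      Or.inl ⟨hc, hc', Or.inr (Or.inr ⟨hζ i hi', hη j hj'⟩)⟩⟩

theorem patching_walks_general {VK VL VG : Type*} [DecidableEq VG]
    (K : SimpleGraph VK) (L : SimpleGraph VL)
    (α : VK → VG) (β : VL → VG)
    (Compat : VK → VL → Prop) (hCompat : ∀ x y, Compat x y ↔ α x = β y)
    (q r : ℕ) (ζ : ℕ → VK) (η : ℕ → VL)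
    (hζ : ∀ i < q, K.Adj (ζ i) (ζ (i + 1)))
    (hη : ∀ j < r, L.Adj (η j) (η (j + 1)))
    (hpatch : (List.ofFn fun i : Fin (q + 1) => α (ζ i)).destutter (· ≠ ·)
            = (List.ofFn fun j : Fin (r + 1) => β (η j)).destutter (· ≠ ·)) :
    ∃ (m : ℕ) (I J : ℕ → ℕ),
      I 0 = 0 ∧ J 0 = 0 ∧ I m = q ∧ J m = r ∧
      (∀ l ≤ m, Compat (ζ (I l)) (η (J l))) ∧
      (∀ l < m, (PatchGraph K L Compat).Adj (ζ (I l), η (J l))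
        (ζ (I (l + 1)), η (J (l + 1)))) ∧
      ∀ l < m,
        ((I l < q ∧ Compat (ζ (I l + 1)) (η (J l)) →
            I (l + 1) = I l + 1 ∧ J (l + 1) = J l) ∧
         (¬(I l < q ∧ Compat (ζ (I l + 1)) (η (J l))) ∧
            (J l < r ∧ Compat (ζ (I l)) (η (J l + 1))) →
            I (l + 1) = I l ∧ J (l + 1) = J l + 1) ∧
         (¬(I l < q ∧ Compat (ζ (I l + 1)) (η (J l))) ∧
            ¬(J l < r ∧ Compat (ζ (I l)) (η (J l + 1))) →
            I (l + 1) = I l + 1 ∧ J (l + 1) = J l + 1)) := by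
  have hstart : TailsMatch (fun i => α (ζ i)) (fun j => β (η j)) q r (0, 0) :=
    ⟨Nat.zero_le q, Nat.zero_le r, hpatch⟩
  obtain ⟨m, hm, hmatch⟩ := hstart.exists_iterate_greedyStep_eq
  set step := greedyStep (fun i => α (ζ i)) (fun j => β (η j)) q r
  have hcompat : ∀ l ≤ m, Compat (ζ (step^[l] (0, 0)).1) (η (step^[l] (0, 0)).2) :=
    fun l hl => (hCompat _ _).2 (hmatch l hl).apply_eq
  refine ⟨m, fun l => (step^[l] (0, 0)).1, fun l => (step^[l] (0, 0)).2, rfl, rfl,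
    congrArg Prod.fst hm, congrArg Prod.snd hm, hcompat, fun l hl => ?_, fun l _ => ?_⟩ <;>
    dsimp only <;> rw [Function.iterate_succ_apply']
  · obtain ⟨hi, hj, -⟩ := hmatch (l + 1) hl
    have hc := hcompat (l + 1) hl
    rw [Function.iterate_succ_apply'] at hi hj hc
    exact patchGraph_adj_of_move hζ hη (hcompat l hl.le) hc hi hj (greedyStep_eq_or _ _ q r _)
  · simpa only [hCompat] using
      greedyStep_spec (fun i => α (ζ i)) (fun j => β (η j)) q r (step^[l] (0, 0))

/-- Patching two walks `Q = (ζ_0, ..., ζ_q)` and `R = (η_0, ..., η_r)` whose images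
under the simplicial maps `α`, `β` agree (as walks in the common target graph, i.e.
after disregarding contracted edges): the greedy sequence which starts at `ζ_0 ∗ η_0`
and moves to `ζ_{i+1} ∗ η_j` if well defined, else to `ζ_i ∗ η_{j+1}` if well defined,
else to `ζ_{i+1} ∗ η_{j+1}`, is a well-defined walk in `H` from `ζ_0 ∗ η_0` to
`ζ_q ∗ η_r`. -/
theorem patching_walks {VK VL VG : Type*} [DecidableEq VG]
    (K : SimpleGraph VK) (L : SimpleGraph VL) (GM : SimpleGraph VG)
    (α : VK → VG) (β : VL → VG)
    (hα : SimplicialMap K GM α) (hβ : SimplicialMap L GM β)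
    (Compat : VK → VL → Prop) (hCompat : ∀ x y, Compat x y ↔ α x = β y)
    (q r : ℕ) (ζ : ℕ → VK) (η : ℕ → VL)
    (hζ : ∀ i < q, K.Adj (ζ i) (ζ (i + 1)))
    (hη : ∀ j < r, L.Adj (η j) (η (j + 1)))
    (h0 : Compat (ζ 0) (η 0)) (hqr : Compat (ζ q) (η r))
    (hpatch : (List.ofFn fun i : Fin (q + 1) => α (ζ i)).destutter (· ≠ ·)
            = (List.ofFn fun j : Fin (r + 1) => β (η j)).destutter (· ≠ ·)) :
    ∃ (m : ℕ) (I J : ℕ → ℕ),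
      I 0 = 0 ∧ J 0 = 0 ∧ I m = q ∧ J m = r ∧
      (∀ l ≤ m, Compat (ζ (I l)) (η (J l))) ∧
      (∀ l < m, (PatchGraph K L Compat).Adj (ζ (I l), η (J l))
        (ζ (I (l + 1)), η (J (l + 1)))) ∧
      ∀ l < m,
        ((I l < q ∧ Compat (ζ (I l + 1)) (η (J l)) →
            I (l + 1) = I l + 1 ∧ J (l + 1) = J l) ∧
         (¬(I l < q ∧ Compat (ζ (I l + 1)) (η (J l))) ∧
            (J l < r ∧ Compat (ζ (I l)) (η (J l + 1))) →
            I (l + 1) = I l ∧ J (l + 1) = J l + 1) ∧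
         (¬(I l < q ∧ Compat (ζ (I l + 1)) (η (J l))) ∧
            ¬(J l < r ∧ Compat (ζ (I l)) (η (J l + 1))) →
            I (l + 1) = I l + 1 ∧ J (l + 1) = J l + 1)) :=
  patching_walks_general K L α β Compat hCompat q r ζ η hζ hη hpatch
end

section
/- Let n ≥ 1 and consider a zig-zag diagram G_{0,1} → G_1 ← G_{1,2} → G_2 ← ... → G_{n-1} ← G_{n-1,n} of graphs and simplicial maps in which every graph G_{i-1,i} and G_i is either a path graph or a cycle graph. Given two nodes x_i, y_i in each G_{i-1,i}, suppose for each i there is a walk P_i in G_{i-1,i} from x_i to y_i traversing each edge of G_{i-1,i} exactly once, and that α_i(P_i) = β_i(P_{i+1}) for all i ∈ [n−1], where α_i, β_i are the maps into G_i. Then there exists a walk in the inverse limit graph of the diagram, from the node determined by (x_1, ..., x_n) to the node determined by (y_1, ..., y_n), whose projection to each G_{i-1,i} equals P_i. -/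
/-!
Reparametrize each image walk `Q_i = α_i(P_i) = β_i(P_{i+1})` by counting the non-contracted
edges traversed so far: positions along `P_i` and `P_{i+1}` then map to positions along `Q_i` by
lazy monotone lattice paths `σ_i` and `τ_i`, and a tuple of positions `(c_0, …, c_n)` with
`σ_i c_i = τ_i c_{i+1}` for all `i` is a node of the inverse limit. Two lazy paths with the same
endpoints always admit a joint monotone path through their fibre product, built backwards one
step at a time; merging the factors of the chain one at a time gives a monotone path of position
tuples from `(0, …, 0)` to the tuple of lengths, and reading off the nodes of the `P_i` along it
gives the required walk, each of whose coordinates visits `P_i` in order with pauses.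
-/

/-- A path graph: the vertices can be enumerated bijectively as `w 0, ..., w k` so that
the edges are exactly the pairs of consecutive vertices. -/
def IsPathGraph {V : Type*} (G : SimpleGraph V) : Prop :=
  ∃ (k : ℕ) (w : Fin (k + 1) → V), Function.Bijective w ∧
    ∀ a b : Fin (k + 1), G.Adj (w a) (w b) ↔ (a.1 + 1 = b.1 ∨ b.1 + 1 = a.1)

/-- A cycle graph: a connected graph in which every vertex has exactly two neighbors. -/
def IsCycleGraph {V : Type*} (G : SimpleGraph V) : Prop :=
  G.Connected ∧ ∀ v : V, (G.neighborSet v).ncard = 2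

def IsLazyUpPath (m : ℕ) (s : ℕ → ℕ) : Prop :=
  ∀ l < m, s (l + 1) = s l ∨ s (l + 1) = s l + 1

namespace IsLazyUpPath

variable {m : ℕ} {s : ℕ → ℕ}

theorem mono {k : ℕ} (hs : IsLazyUpPath m s) (hk : k ≤ m) : IsLazyUpPath k s :=
  fun l hl => hs l (by omega)

theorem apply_le_apply (hs : IsLazyUpPath m s) {j k : ℕ} (hjk : j ≤ k) (hk : k ≤ m) :
    s j ≤ s k := by
  induction k, hjk using Nat.le_induction with
  | base => rfl
  | succ k _ ih => rcases hs k (by omega) with h | h <;> omega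

theorem exists_apply_eq (hs : IsLazyUpPath m s) {j : ℕ} (h0 : s 0 ≤ j) (hm : j ≤ s m) :
    ∃ l ≤ m, s l = j := by
  induction m with
  | zero => exact ⟨0, le_rfl, by omega⟩
  | succ m ih =>
    rcases Nat.lt_or_ge j (s (m + 1)) with hj | hj
    · have := hs m m.lt_succ_self
      obtain ⟨l, hl, rfl⟩ := ih (hs.mono m.le_succ) (by omega)
      exact ⟨l, by omega, rfl⟩
    · exact ⟨m + 1, le_rfl, by omega⟩

theorem comp {c : ℕ → ℕ} (hs : IsLazyUpPath (c m) s) (hc : IsLazyUpPath m c) :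
    IsLazyUpPath m (s ∘ c) := by
  intro l hl
  rcases hc l hl with h | h
  · exact Or.inl (by simp [h])
  · have := hc.apply_le_apply (show l + 1 ≤ m by omega) le_rfl
    simpa [h] using hs (c l) (by omega)

theorem update_succ (hs : IsLazyUpPath m s) {a : ℕ} (ha : a = s m ∨ a = s m + 1) :
    IsLazyUpPath (m + 1) (Function.update s (m + 1) a) := by
  intro l hl
  rcases Nat.lt_or_ge l m with h | h
  · simpa [Function.update_of_ne (show l ≠ m + 1 by omega),
      Function.update_of_ne (show l + 1 ≠ m + 1 by omega)] using hs l h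
  · obtain rfl : l = m := by omega
    simpa [Function.update_of_ne (show l ≠ l + 1 by omega)] using ha

end IsLazyUpPath

section ChangeCount

variable {α : Type*} [DecidableEq α]

def changeCount (f : ℕ → α) (l : ℕ) : ℕ :=
  ∑ j ∈ Finset.range l, if f j = f (j + 1) then 0 else 1

@[simp] theorem changeCount_zero (f : ℕ → α) : changeCount f 0 = 0 := rfl

theorem changeCount_succ (f : ℕ → α) (l : ℕ) :
    changeCount f (l + 1) = changeCount f l + if f l = f (l + 1) then 0 else 1 :=
  Finset.sum_range_succ _ _

theorem changeCount_succ' (f : ℕ → α) (l : ℕ) :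
    changeCount f (l + 1) = changeCount (fun j => f (j + 1)) l + if f 0 = f 1 then 0 else 1 :=
  Finset.sum_range_succ' _ _

theorem isLazyUpPath_changeCount (f : ℕ → α) (m : ℕ) : IsLazyUpPath m (changeCount f) := by
  intro l _
  rw [changeCount_succ]
  split_ifs <;> simp

theorem changeCount_comp {g : ℕ → α} {t : ℕ → ℕ} {m : ℕ} (ht : IsLazyUpPath m t)
    (ht0 : t 0 = 0) (hg : ∀ j < t m, g j ≠ g (j + 1)) {l : ℕ} (hl : l ≤ m) :
    changeCount (fun j => g (t j)) l = t l := by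
  induction l with
  | zero => simp [ht0]
  | succ l ih =>
    rw [changeCount_succ, ih (by omega)]
    rcases ht l (by omega) with h | h
    · simp [h]
    · have := ht.apply_le_apply hl le_rfl
      rw [h, if_neg (hg _ (by omega))]

def destutterPrefix (f : ℕ → α) (m : ℕ) : List α :=
  (List.ofFn fun l : Fin (m + 1) => f l).destutter (· ≠ ·)

theorem destutterPrefix_succ (f : ℕ → α) (m : ℕ) :
    destutterPrefix f (m + 1) =
      if f 0 = f 1 then destutterPrefix (fun l => f (l + 1)) m
      else f 0 :: destutterPrefix (fun l => f (l + 1)) m := by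
  rw [destutterPrefix, List.ofFn_succ, List.ofFn_succ, List.destutter_cons_cons]
  split_ifs with h <;> simp_all [destutterPrefix, List.destutter_cons', List.ofFn_succ]

theorem length_destutterPrefix (f : ℕ → α) (m : ℕ) :
    (destutterPrefix f m).length = changeCount f m + 1 := by
  induction m generalizing f with
  | zero => simp [destutterPrefix]
  | succ m ih => rw [destutterPrefix_succ]; split_ifs <;> simp [changeCount_succ', *]

theorem getElem?_destutterPrefix_changeCount (f : ℕ → α) {m l : ℕ} (hl : l ≤ m) :
    (destutterPrefix f m)[changeCount f l]? = some (f l) := by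
  induction m generalizing f l with
  | zero =>
    obtain rfl : l = 0 := by omega
    simp [destutterPrefix]
  | succ m ih =>
    rw [destutterPrefix_succ]
    rcases l with _ | l
    · split_ifs with h
      · simpa [h] using ih (fun j => f (j + 1)) (Nat.zero_le _)
      · simp
    · split_ifs with h <;>
        simpa [changeCount_succ', h] using ih (fun j => f (j + 1)) (by omega : l ≤ m)

theorem changeCount_eq_of_destutterPrefix_eq {f g : ℕ → α} {a b : ℕ}
    (h : destutterPrefix f a = destutterPrefix g b) : changeCount f a = changeCount g b := by
  simpa [length_destutterPrefix] using congrArg List.length h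

theorem eq_of_destutterPrefix_eq {f g : ℕ → α} {a b l l' : ℕ}
    (h : destutterPrefix f a = destutterPrefix g b) (hl : l ≤ a) (hl' : l' ≤ b)
    (hch : changeCount f l = changeCount g l') : f l = g l' := by
  have := getElem?_destutterPrefix_changeCount f hl
  rwa [h, hch, getElem?_destutterPrefix_changeCount g hl', Option.some_inj, eq_comm] at this

theorem destutterPrefix_comp {g : ℕ → α} {t : ℕ → ℕ} {m : ℕ} (ht : IsLazyUpPath m t)
    (ht0 : t 0 = 0) (hg : ∀ j < t m, g j ≠ g (j + 1)) :
    destutterPrefix (fun l => g (t l)) m = List.ofFn fun j : Fin (t m + 1) => g j := by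
  refine List.ext_getElem? fun j => ?_
  rcases Nat.lt_or_ge (t m) j with hj | hj
  · have hlen : (destutterPrefix (fun l => g (t l)) m).length = t m + 1 := by
      rw [length_destutterPrefix, changeCount_comp ht ht0 hg le_rfl]
    rw [List.getElem?_eq_none (by omega), List.getElem?_eq_none (by simp; omega)]
  · obtain ⟨l, hl, rfl⟩ := ht.exists_apply_eq (by omega) hj
    rw [← changeCount_comp ht ht0 hg hl, getElem?_destutterPrefix_changeCount _ hl,
      changeCount_comp ht ht0 hg hl, List.getElem?_ofFn]
    simp [Nat.lt_succ_of_le hj]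

end ChangeCount

def IsFiberProductPath (s t : ℕ → ℕ) (a b k : ℕ) (u v : ℕ → ℕ) : Prop :=
  u 0 = 0 ∧ v 0 = 0 ∧ u k = a ∧ v k = b ∧ IsLazyUpPath k u ∧ IsLazyUpPath k v ∧
    (∀ j < k, u j ≠ u (j + 1) ∨ v j ≠ v (j + 1)) ∧ ∀ j ≤ k, s (u j) = t (v j)

theorem IsFiberProductPath.snoc {s t : ℕ → ℕ} {a b a' b' k : ℕ} {u v : ℕ → ℕ}
    (h : IsFiberProductPath s t a' b' k u v) (ha : a = a' ∨ a = a' + 1)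
    (hb : b = b' ∨ b = b' + 1) (hne : a ≠ a' ∨ b ≠ b') (hab : s a = t b) :
    IsFiberProductPath s t a b (k + 1) (Function.update u (k + 1) a)
      (Function.update v (k + 1) b) := by
  obtain ⟨hu0, hv0, huk, hvk, hu, hv, hmove, hcompat⟩ := h
  have upd : ∀ {w : ℕ → ℕ} {c j}, j ≤ k → Function.update w (k + 1) c j = w j :=
    fun hj => Function.update_of_ne (by omega) _ _
  refine ⟨by simp [hu0], by simp [hv0], by simp, by simp, hu.update_succ (by omega),
    hv.update_succ (by omega), fun j hj => ?_, fun j hj => ?_⟩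
  · rcases Nat.lt_or_ge j k with hjk | hjk
    · simpa [upd hjk.le, upd hjk] using hmove j hjk
    · obtain rfl : j = k := by omega
      rw [upd le_rfl, upd le_rfl, Function.update_self, Function.update_self, huk, hvk]
      omega
  · rcases Nat.lt_or_ge j (k + 1) with hjk | hjk
    · simpa [upd (Nat.le_of_lt_succ hjk)] using hcompat j (by omega)
    · obtain rfl : j = k + 1 := by omega
      simpa using hab

theorem IsLazyUpPath.exists_isFiberProductPath {s t : ℕ → ℕ} {a b : ℕ}
    (hs : IsLazyUpPath a s) (ht : IsLazyUpPath b t) (h0 : s 0 = t 0) (hab : s a = t b) :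
    ∃ k u v, IsFiberProductPath s t a b k u v := by
  -- Peel off the last step: a pause of `s`, a pause of `t`, or a unit step of both. When `a = 0`
  -- or `b = 0` only a pause is possible, as `s` and `t` are monotone with equal end values.
  induction a generalizing b with
  | zero =>
    induction b with
    | zero => exact ⟨0, 0, 0, by simp [IsFiberProductPath, IsLazyUpPath, h0]⟩
    | succ b ihb =>
      have htb : t b = t (b + 1) := by
        have := ht.apply_le_apply (Nat.zero_le b) b.le_succ
        rcases ht b b.lt_succ_self with h | h <;> omega
      obtain ⟨k, u, v, h⟩ := ihb (ht.mono b.le_succ) (htb ▸ hab)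
      exact ⟨_, _, _, h.snoc (by omega) (by omega) (by omega) hab⟩
  | succ a iha =>
    induction b with
    | zero =>
      have hsa : s a = s (a + 1) := by
        have := hs.apply_le_apply (Nat.zero_le a) a.le_succ
        rcases hs a a.lt_succ_self with h | h <;> omega
      obtain ⟨k, u, v, h⟩ := iha (hs.mono a.le_succ) ht (hsa ▸ hab)
      exact ⟨_, _, _, h.snoc (by omega) (by omega) (by omega) hab⟩
    | succ b ihb =>
      by_cases hsa : s a = s (a + 1)
      · obtain ⟨k, u, v, h⟩ := iha (hs.mono a.le_succ) ht (hsa ▸ hab)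
        exact ⟨_, _, _, h.snoc (by omega) (by omega) (by omega) hab⟩
      by_cases htb : t b = t (b + 1)
      · obtain ⟨k, u, v, h⟩ := ihb (ht.mono b.le_succ) (htb ▸ hab)
        exact ⟨_, _, _, h.snoc (by omega) (by omega) (by omega) hab⟩
      have := hs a a.lt_succ_self
      have := ht b b.lt_succ_self
      obtain ⟨k, u, v, h⟩ := iha (hs.mono a.le_succ) (ht.mono b.le_succ) (by omega)
      exact ⟨_, _, _, h.snoc (by omega) (by omega) (by omega) hab⟩

theorem exists_inverseLimit_path (n : ℕ) (L : ℕ → ℕ) (σ τ : ℕ → ℕ → ℕ)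
    (hσ : ∀ i < n, IsLazyUpPath (L i) (σ i)) (hτ : ∀ i < n, IsLazyUpPath (L (i + 1)) (τ i))
    (h0 : ∀ i < n, σ i 0 = τ i 0) (hL : ∀ i < n, σ i (L i) = τ i (L (i + 1))) :
    ∃ (m : ℕ) (c : ℕ → ℕ → ℕ), (∀ i, c 0 i = 0) ∧ (∀ i ≤ n, c m i = L i) ∧
      (∀ i ≤ n, IsLazyUpPath m (c · i)) ∧ (∀ l < m, ∃ i ≤ n, c l i ≠ c (l + 1) i) ∧
      ∀ l ≤ m, ∀ i < n, σ i (c l i) = τ i (c l (i + 1)) := by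
  induction n with
  | zero =>
    refine ⟨L 0, fun l _ => l, fun _ => rfl, fun i hi => by rw [Nat.le_zero.mp hi],
      fun _ _ l _ => Or.inr rfl, fun l _ => ⟨0, le_rfl, by simp⟩, fun _ _ i hi => by omega⟩
  | succ n ih =>
    -- merge the new coordinate with the path built so far, viewed through `σ n`
    obtain ⟨m, c, hc0, hcm, hc, hmove, hcompat⟩ := ih (fun i hi => hσ i (by omega))
      (fun i hi => hτ i (by omega)) (fun i hi => h0 i (by omega)) (fun i hi => hL i (by omega))
    have hs : IsLazyUpPath m (σ n ∘ (c · n)) :=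
      IsLazyUpPath.comp (by simpa [hcm n le_rfl] using hσ n n.lt_succ_self) (hc n le_rfl)
    obtain ⟨k, u, v, hu0, hv0, huk, hvk, hu, hv, hmove', hcompat'⟩ :=
      hs.exists_isFiberProductPath (hτ n n.lt_succ_self) (by simp [hc0, h0]) (by simp [hcm, hL])
    have hum : ∀ l ≤ k, u l ≤ m := fun l hl => huk ▸ hu.apply_le_apply hl le_rfl
    refine ⟨k, fun l => Function.update (c (u l)) (n + 1) (v l), fun i => ?_, fun i hi => ?_,
      fun i hi => ?_, fun l hl => ?_, fun l hl i hi => ?_⟩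
    · rcases eq_or_ne i (n + 1) with rfl | hi <;> simp [*]
    · rcases eq_or_ne i (n + 1) with rfl | hi'
      · simp [hvk]
      · simp [hi', huk, hcm i (by omega)]
    · rcases eq_or_ne i (n + 1) with rfl | hi'
      · simpa using hv
      · simpa [hi'] using ((huk ▸ hc i (by omega)).comp hu)
    · rcases hmove' l hl with h | h
      · have := hu l hl
        obtain ⟨i, hi, hne⟩ := hmove (u l) (by have := hum (l + 1) hl; omega)
        have hu' : u (l + 1) = u l + 1 := by omega
        exact ⟨i, by omega, by simpa [show i ≠ n + 1 by omega, hu']⟩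
      · exact ⟨n + 1, le_rfl, by simpa⟩
    · rcases Nat.lt_or_ge i n with hin | hin
      · dsimp only
        rw [Function.update_of_ne (by omega), Function.update_of_ne (by omega)]
        exact hcompat (u l) (hum l hl) i hin
      · obtain rfl : i = n := by omega
        simpa using hcompat' l hl

section Walks

variable {VE : ℕ → Type*} [∀ i, DecidableEq (VE i)] {n : ℕ} {L : ℕ → ℕ}
  {p : ∀ i, ℕ → VE i} {x y : ∀ i, VE i}

/- The coordinates `i > n` carry no condition except at the two ends, where they must read `x`
and `y`; even when every `P_i` is trivial, one step may be needed to switch them over. -/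
theorem exists_walk_of_lengths_eq_zero (hL : ∀ i ≤ n, L i = 0) (hp0 : ∀ i ≤ n, p i 0 = x i)
    (hpL : ∀ i ≤ n, p i (L i) = y i) :
    ∃ (m : ℕ) (w : ℕ → ∀ i, VE i), w 0 = x ∧ w m = y ∧
      (∀ l ≤ m, w l = x ∨ w l = y) ∧
      (∀ l < m, w l ≠ w (l + 1) ∧ ∀ i ≤ n, w l i = w (l + 1) i) ∧
      ∀ i ≤ n, (List.ofFn fun l : Fin (m + 1) => w l i).destutter (· ≠ ·)
        = List.ofFn fun l : Fin (L i + 1) => p i l := by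
  classical
  have hxy : ∀ i ≤ n, x i = y i := fun i hi => by rw [← hp0 i hi, ← hpL i hi, hL i hi]
  refine ⟨if x = y then 0 else 1, fun l => if l = 0 then x else y, rfl, ?_, fun l _ => ?_,
    fun l hl => ?_, fun i hi => ?_⟩ <;> dsimp only
  · split_ifs with h <;> simp_all
  · split_ifs <;> simp
  · split_ifs at hl with h
    · omega
    obtain rfl : l = 0 := by omega
    simpa [h] using fun i hi => hxy i hi
  · rw [hL i hi]
    split_ifs <;> simp [List.destutter_pair, hp0 i hi, hxy i hi]

theorem exists_walk_of_isLazyUpPath {GE : ∀ i, SimpleGraph (VE i)} {m : ℕ}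
    {c : ℕ → ℕ → ℕ} (hm : 0 < m) (hc0 : ∀ i, c 0 i = 0) (hcm : ∀ i ≤ n, c m i = L i)
    (hc : ∀ i ≤ n, IsLazyUpPath m (c · i))
    (hmove : ∀ l < m, ∃ i ≤ n, c l i ≠ c (l + 1) i)
    (hp0 : ∀ i ≤ n, p i 0 = x i) (hpL : ∀ i ≤ n, p i (L i) = y i)
    (hadj : ∀ i ≤ n, ∀ j < L i, (GE i).Adj (p i j) (p i (j + 1))) :
    ∃ w : ℕ → ∀ i, VE i, w 0 = x ∧ w m = y ∧
      (∀ l ≤ m, ∀ i ≤ n, w l i = p i (c l i)) ∧ (∀ l < m, w l ≠ w (l + 1) ∧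
        ∀ i ≤ n, w l i = w (l + 1) i ∨ (GE i).Adj (w l i) (w (l + 1) i)) ∧
      ∀ i ≤ n, (List.ofFn fun l : Fin (m + 1) => w l i).destutter (· ≠ ·)
        = List.ofFn fun l : Fin (L i + 1) => p i l := by
  have hcL : ∀ l ≤ m, ∀ i ≤ n, c l i ≤ L i :=
    fun l hl i hi => hcm i hi ▸ (hc i hi).apply_le_apply hl le_rfl
  have hne : ∀ i ≤ n, ∀ j < L i, p i j ≠ p i (j + 1) := fun i hi j hj => (hadj i hi j hj).ne
  refine ⟨fun l i => if i ≤ n then p i (c l i) else if l = 0 then x i else y i,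
    funext fun i => ?_, funext fun i => ?_, fun l _ i hi => if_pos hi,
    fun l hl => ⟨?_, fun i hi => ?_⟩, fun i hi => ?_⟩
  · dsimp only
    by_cases hi : i ≤ n
    · rw [if_pos hi, hc0, hp0 i hi]
    · rw [if_neg hi, if_pos rfl]
  · dsimp only
    by_cases hi : i ≤ n
    · rw [if_pos hi, hcm i hi, hpL i hi]
    · rw [if_neg hi, if_neg hm.ne']
  · obtain ⟨i, hi, hci⟩ := hmove l hl
    have := hcL (l + 1) hl i hi
    rcases hc i hi l hl with h | h <;> dsimp only at h
    · exact absurd h.symm hci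
    · intro hw
      have := congrFun hw i
      simp only [hi, if_true, h] at this
      exact hne i hi (c l i) (by omega) this
  · simp only [hi, if_true]
    rcases hc i hi l hl with h | h <;> dsimp only at h
    · exact Or.inl (by rw [h])
    · have := hcL (l + 1) hl i hi
      exact Or.inr (h ▸ hadj i hi _ (by omega))
  · simp only [hi, if_true]
    have := destutterPrefix_comp (hc i hi) (hc0 i) (hcm i hi ▸ hne i hi)
    rwa [hcm i hi] at this

end Walks

/-- `VE i` is the node set of `G_{i,i+1}` and `VM i` that of `G_i`; `dn i` is `β_i` and `up i` is
`α_{i+1}`. The walk `P_i` is `p i 0, …, p i (L i)`, and the image of a walk under a simplicial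
map, with contracted edges omitted, is the destuttered list of images of its nodes. -/
theorem inverse_limit_walk_general (n : ℕ) (hn : 1 ≤ n)
    (VE : ℕ → Type*) (VM : ℕ → Type*) [∀ i, DecidableEq (VE i)] [∀ i, DecidableEq (VM i)]
    (GE : ∀ i, SimpleGraph (VE i))
    (up : ∀ i, VE i → VM (i + 1)) (dn : ∀ i, VE i → VM i)
    (x y : ∀ i, VE i)
    (hcompx : ∀ i, i + 1 < n → up i (x i) = dn (i + 1) (x (i + 1)))
    (hcompy : ∀ i, i + 1 < n → up i (y i) = dn (i + 1) (y (i + 1)))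
    (L : ℕ → ℕ) (p : ∀ i, ℕ → VE i)
    (hp0 : ∀ i < n, p i 0 = x i) (hpL : ∀ i < n, p i (L i) = y i)
    (hadj : ∀ i < n, ∀ l < L i, (GE i).Adj (p i l) (p i (l + 1)))
    (hglue : ∀ i, i + 1 < n →
      (List.ofFn fun l : Fin (L i + 1) => up i (p i l)).destutter (· ≠ ·)
        = (List.ofFn fun l : Fin (L (i + 1) + 1) => dn (i + 1) (p (i + 1) l)).destutter
            (· ≠ ·)) :
    ∃ (m : ℕ) (w : ℕ → ∀ i, VE i),
      w 0 = x ∧ w m = y ∧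
      (∀ l ≤ m, ∀ i, i + 1 < n → up i (w l i) = dn (i + 1) (w l (i + 1))) ∧
      (∀ l < m, w l ≠ w (l + 1) ∧
        ∀ i < n, w l i = w (l + 1) i ∨ (GE i).Adj (w l i) (w (l + 1) i)) ∧
      ∀ i < n, (List.ofFn fun l : Fin (m + 1) => w l i).destutter (· ≠ ·)
        = List.ofFn fun l : Fin (L i + 1) => p i l := by
  obtain ⟨n, rfl⟩ : ∃ k, n = k + 1 := ⟨n - 1, by omega⟩
  have hglue' : ∀ i < n, destutterPrefix (fun l => up i (p i l)) (L i) =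
      destutterPrefix (fun l => dn (i + 1) (p (i + 1) l)) (L (i + 1)) :=
    fun i hi => hglue i (by omega)
  obtain ⟨m, c, hc0, hcm, hc, hmove, hcompat⟩ := exists_inverseLimit_path n L
    (fun i => changeCount fun l => up i (p i l))
    (fun i => changeCount fun l => dn (i + 1) (p (i + 1) l))
    (fun _ _ => isLazyUpPath_changeCount _ _) (fun _ _ => isLazyUpPath_changeCount _ _)
    (fun _ _ => rfl) (fun i hi => changeCount_eq_of_destutterPrefix_eq (hglue' i hi))
  have hp0' : ∀ i ≤ n, p i 0 = x i := fun i hi => hp0 i (by omega)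
  have hpL' : ∀ i ≤ n, p i (L i) = y i := fun i hi => hpL i (by omega)
  rcases Nat.eq_zero_or_pos m with rfl | hm
  · obtain ⟨m, w, hw0, hwm, hwxy, hstep, hproj⟩ :=
      exists_walk_of_lengths_eq_zero (fun i hi => (hcm i hi).symm.trans (hc0 i)) hp0' hpL'
    refine ⟨m, w, hw0, hwm, fun l hl i hi => ?_,
      fun l hl => ⟨(hstep l hl).1, fun i hi => Or.inl ((hstep l hl).2 i (by omega))⟩,
      fun i hi => hproj i (by omega)⟩
    rcases hwxy l hl with h | h <;> rw [h]
    exacts [hcompx i hi, hcompy i hi]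
  · obtain ⟨w, hw0, hwm, hwc, hstep, hproj⟩ := exists_walk_of_isLazyUpPath (GE := GE) hm hc0
      hcm hc hmove hp0' hpL' (fun i hi => hadj i (by omega))
    refine ⟨m, w, hw0, hwm, fun l hl i hi => ?_,
      fun l hl => ⟨(hstep l hl).1, fun i hi => (hstep l hl).2 i (by omega)⟩,
      fun i hi => hproj i (by omega)⟩
    have hcL : ∀ j ≤ n, c l j ≤ L j :=
      fun j hj => hcm j hj ▸ (hc j hj).apply_le_apply hl le_rfl
    rw [hwc l hl i (by omega), hwc l hl (i + 1) (by omega)]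
    exact eq_of_destutterPrefix_eq (hglue' i (by omega)) (hcL i (by omega)) (hcL (i + 1) (by omega))
      (hcompat l hl i (by omega))

/-- Proposition: given a zig-zag diagram
`G_{0,1} → G_1 ← G_{1,2} → G_2 ← ⋯ → G_{n-1} ← G_{n-1,n}` of graphs (each a path graph
or a cycle graph) and simplicial maps, with a walk `P_i` in each `G_{i-1,i}` from `x_i`
to `y_i` traversing each edge exactly once and with compatible images
`α_i(P_i) = β_i(P_{i+1})`, there is a walk in the inverse limit graph from the node
`(x_1, ..., x_n)` to the node `(y_1, ..., y_n)` projecting to each `P_i`.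
Here `VE i` is the node set of `G_{i,i+1}` (for `0 ≤ i < n`), `VM i` that of `G_i`,
`dn i : VE i → VM i` is `β_i` and `up i : VE i → VM (i+1)` is `α_{i+1}`. -/
theorem inverse_limit_walk (n : ℕ) (hn : 1 ≤ n)
    (VE : ℕ → Type*) (VM : ℕ → Type*) [∀ i, DecidableEq (VE i)] [∀ i, DecidableEq (VM i)]
    (GE : ∀ i, SimpleGraph (VE i)) (GM : ∀ i, SimpleGraph (VM i))
    (up : ∀ i, VE i → VM (i + 1)) (dn : ∀ i, VE i → VM i)
    (hup : ∀ i, SimplicialMap (GE i) (GM (i + 1)) (up i))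
    (hdn : ∀ i, SimplicialMap (GE i) (GM i) (dn i))
    (hshapeE : ∀ i < n, IsPathGraph (GE i) ∨ IsCycleGraph (GE i))
    (hshapeM : ∀ i, 1 ≤ i → i < n → IsPathGraph (GM i) ∨ IsCycleGraph (GM i))
    (x y : ∀ i, VE i)
    (hcompx : ∀ i, i + 1 < n → up i (x i) = dn (i + 1) (x (i + 1)))
    (hcompy : ∀ i, i + 1 < n → up i (y i) = dn (i + 1) (y (i + 1)))
    (L : ℕ → ℕ) (p : ∀ i, ℕ → VE i)
    (hp0 : ∀ i < n, p i 0 = x i) (hpL : ∀ i < n, p i (L i) = y i)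
    (hadj : ∀ i < n, ∀ l < L i, (GE i).Adj (p i l) (p i (l + 1)))
    (heuler : ∀ i < n, ∀ e ∈ (GE i).edgeSet,
      ∃! l : ℕ, l < L i ∧ s(p i l, p i (l + 1)) = e)
    (hglue : ∀ i, i + 1 < n →
      (List.ofFn fun l : Fin (L i + 1) => up i (p i l)).destutter (· ≠ ·)
        = (List.ofFn fun l : Fin (L (i + 1) + 1) => dn (i + 1) (p (i + 1) l)).destutter
            (· ≠ ·)) :
    ∃ (m : ℕ) (w : ℕ → ∀ i, VE i),
      w 0 = x ∧ w m = y ∧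
      (∀ l ≤ m, ∀ i, i + 1 < n → up i (w l i) = dn (i + 1) (w l (i + 1))) ∧
      (∀ l < m, w l ≠ w (l + 1) ∧
        ∀ i < n, w l i = w (l + 1) i ∨ (GE i).Adj (w l i) (w (l + 1) i)) ∧
      ∀ i < n, (List.ofFn fun l : Fin (m + 1) => w l i).destutter (· ≠ ·)
        = List.ofFn fun l : Fin (L i + 1) => p i l :=
  inverse_limit_walk_general n hn VE VM GE up dn x y hcompx hcompy L p hp0 hpL hadj hglue
end
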